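/- Let X ∈ R^{m1×m2} be a matrix with singular value decomposition X = Σ_j σ_j(X) u_j(X) v_j(X)^T, and let λ > 0, m1, m2 ≥ 1. Then the function F(A) = ||A − X||²₂ + λ m1 m2 ||A||₁ over A ∈ R^{m1×m2} has a unique minimizer, given by soft-thresholding of the singular values: Â = Σ_j (σ_j(X) − λ m1 m2 / 2)₊ u_j(X) v_j(X)^T, where x₊ = max{x, 0}. -/

import Mathlib

open MeasureTheory ProbabilityTheory Matrix Real
open scoped ENNReal NNReal BigOperators

noncomputable section

instance {m1 m2 : ℕ} : MeasurableSpace (Matrix (Fin m1) (Fin m2) ℝ) :=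
  (inferInstance : MeasurableSpace (Fin m1 → Fin m2 → ℝ))

/-- Trace inner product `⟨A,B⟩ = tr(AᵀB)`. -/
def tip {m1 m2 : ℕ} (A B : Matrix (Fin m1) (Fin m2) ℝ) : ℝ := (Aᵀ * B).trace

/-- Frobenius norm `‖A‖₂`. -/
def frob {m1 m2 : ℕ} (A : Matrix (Fin m1) (Fin m2) ℝ) : ℝ :=
  Real.sqrt (∑ i, ∑ j, (A i j) ^ 2)

/-- Removed from Mathlib; restored with its old statement. -/
theorem Matrix.isHermitian_transpose_mul_self {m n : Type*} [Fintype m] (A : Matrix m n ℝ) :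
    (Aᵀ * A).IsHermitian := by
  simpa using Matrix.isHermitian_conjTranspose_mul_self A

/-- Singular values (unordered): square roots of the eigenvalues of `AᴴA`. -/
def sval {m1 m2 : ℕ} (A : Matrix (Fin m1) (Fin m2) ℝ) (j : Fin m2) : ℝ :=
  Real.sqrt ((Matrix.isHermitian_transpose_mul_self A).eigenvalues j)

/-- Nuclear norm `‖A‖₁`: sum of singular values. -/
def nuc {m1 m2 : ℕ} (A : Matrix (Fin m1) (Fin m2) ℝ) : ℝ := ∑ j, sval A j

/-- Operator (spectral) norm `‖A‖_∞`. -/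
def opnorm {m1 m2 : ℕ} (A : Matrix (Fin m1) (Fin m2) ℝ) : ℝ :=
  ‖LinearMap.toContinuousLinearMap (Matrix.toEuclideanLin A)‖

/-- Squared `L₂(Π)`-norm: `‖A‖²_{L₂(Π)} = (1/n) ∑ᵢ E⟨A, Xᵢ⟩²`. -/
def l2sq {Ω : Type*} [MeasurableSpace Ω] (μ : Measure Ω) {n m1 m2 : ℕ}
    (X : Fin n → Ω → Matrix (Fin m1) (Fin m2) ℝ) (A : Matrix (Fin m1) (Fin m2) ℝ) : ℝ :=
  (1 / (n : ℝ)) * ∑ i, ∫ ω, (tip A (X i ω)) ^ 2 ∂μ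

/-- The matrix `E(Yᵢ Xᵢ)` (entrywise expectation). -/
def meanYX {Ω : Type*} [MeasurableSpace Ω] (μ : Measure Ω) {n m1 m2 : ℕ}
    (X : Fin n → Ω → Matrix (Fin m1) (Fin m2) ℝ) (Y : Fin n → Ω → ℝ) (i : Fin n) :
    Matrix (Fin m1) (Fin m2) ℝ :=
  Matrix.of fun j k => ∫ ω, Y i ω * X i ω j k ∂μ

/-- The stochastic error matrix `M = (1/n) ∑ᵢ (Yᵢ Xᵢ − E(Yᵢ Xᵢ))`. -/
def errM {Ω : Type*} [MeasurableSpace Ω] (μ : Measure Ω) {n m1 m2 : ℕ}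
    (X : Fin n → Ω → Matrix (Fin m1) (Fin m2) ℝ) (Y : Fin n → Ω → ℝ) (ω : Ω) :
    Matrix (Fin m1) (Fin m2) ℝ :=
  (n : ℝ)⁻¹ • ∑ i, (Y i ω • X i ω - meanYX μ X Y i)

/-- The penalized objective `L_n(A) = ‖A‖²_{L₂(Π)} − ⟨(2/n)∑ᵢYᵢXᵢ, A⟩ + λ‖A‖₁`. -/
def Ln {Ω : Type*} [MeasurableSpace Ω] (μ : Measure Ω) {n m1 m2 : ℕ}
    (X : Fin n → Ω → Matrix (Fin m1) (Fin m2) ℝ) (Y : Fin n → Ω → ℝ) (lam : ℝ)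
    (A : Matrix (Fin m1) (Fin m2) ℝ) (ω : Ω) : ℝ :=
  l2sq μ X A - tip ((2 / (n : ℝ)) • ∑ i, Y i ω • X i ω) A + lam * nuc A

/-- Matrix of the orthogonal projection onto a subspace of `ℝ^d`. -/
def projMat {d : ℕ} (K : Submodule ℝ (EuclideanSpace ℝ (Fin d))) : Matrix (Fin d) (Fin d) ℝ :=
  Matrix.toEuclideanLin.symm (K.subtype ∘ₗ (K.orthogonalProjectionOnto).toLinearMap)

/-- Column space of `A` (the span of its left singular vectors `S₁`). -/
def colSpan {m1 m2 : ℕ} (A : Matrix (Fin m1) (Fin m2) ℝ) :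
    Submodule ℝ (EuclideanSpace ℝ (Fin m1)) := LinearMap.range (Matrix.toEuclideanLin A)

/-- Row space of `A` (the span of its right singular vectors `S₂`). -/
def rowSpan {m1 m2 : ℕ} (A : Matrix (Fin m1) (Fin m2) ℝ) :
    Submodule ℝ (EuclideanSpace ℝ (Fin m2)) := LinearMap.range (Matrix.toEuclideanLin Aᵀ)

/-- `𝒫_A^⊥(B) = P_{S₁ᗮ} B P_{S₂ᗮ}` where `(S₁, S₂)` is the support of `A`. -/
def Pperp {m1 m2 : ℕ} (A B : Matrix (Fin m1) (Fin m2) ℝ) : Matrix (Fin m1) (Fin m2) ℝ :=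
  projMat (colSpan A)ᗮ * B * projMat (rowSpan A)ᗮ

/-- `𝒫_A(B) = B - P_{S₁ᗮ} B P_{S₂ᗮ}`. -/
def calP {m1 m2 : ℕ} (A B : Matrix (Fin m1) (Fin m2) ℝ) : Matrix (Fin m1) (Fin m2) ℝ :=
  B - Pperp A B

/-- The uniform distribution on the matrix completion basis
`𝒳 = {eⱼ(m₁) eₖ(m₂)ᵀ}`. -/
def unifX (m1 m2 : ℕ) : Measure (Matrix (Fin m1) (Fin m2) ℝ) :=
  ((m1 * m2 : ℝ≥0∞))⁻¹ •
    ∑ j : Fin m1, ∑ k : Fin m2, Measure.dirac (Matrix.single j k (1 : ℝ))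

/-- The matrix `𝐗 = (m₁m₂/n) ∑ᵢ Yᵢ Xᵢ`. -/
def hatX {Ω : Type*} {n m1 m2 : ℕ} (X : Fin n → Ω → Matrix (Fin m1) (Fin m2) ℝ)
    (Y : Fin n → Ω → ℝ) (ω : Ω) : Matrix (Fin m1) (Fin m2) ℝ :=
  ((m1 * m2 : ℝ) / (n : ℝ)) • ∑ i, Y i ω • X i ω

/-- The matrix-completion objective `‖A − B‖₂² + λ m₁m₂ ‖A‖₁`. -/
def Fobj {m1 m2 : ℕ} (lam : ℝ) (B A : Matrix (Fin m1) (Fin m2) ℝ) : ℝ :=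
  frob (A - B) ^ 2 + lam * (m1 * m2 : ℝ) * nuc A

/-!
Write `c = λ m₁ m₂`, `t_j = (σ_j − c/2)₊` and `W = X − Â = ∑_j min(σ_j, c/2) u_j v_jᵀ`.
Since `‖W‖_∞ ≤ c/2`, trace duality `⟨W, A⟩ ≤ ‖W‖_∞ ‖A‖₁` gives `⟨W, A⟩ ≤ (c/2) ‖A‖₁` for every `A`,
while orthonormality gives `⟨W, Â⟩ = (c/2) ∑_j t_j ≥ (c/2) ‖Â‖₁`. So `2W` is a subgradient of
`c ‖·‖₁` at `Â`, and expanding `‖A − X‖₂² = ‖A − Â‖₂² − 2⟨W, A − Â⟩ + ‖Â − X‖₂²` yields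
`F(Â) + ‖A − Â‖₂² ≤ F(A)`, which is minimality and uniqueness at once.

Trace duality is Cauchy–Schwarz after evaluating the trace in an eigenbasis `(q_k)` of `MᵀM`,
in which the singular values of `M` are the norms `‖M q_k‖`. The bound `‖Â‖₁ ≤ ∑_j t_j` uses that
duality is attained: the polar factor `P = ∑_k ‖M q_k‖⁻¹ (M q_k) q_kᵀ` has `‖P‖_∞ ≤ 1` and
`⟨P, M⟩ = ‖M‖₁`, so `‖Â‖₁ = ⟨P, Â⟩ = ∑_j t_j ⟨u_j, P v_j⟩ ≤ ∑_j t_j`.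
-/

open WithLp
open scoped InnerProductSpace

lemma norm_sum_sq_of_pairwise_inner_eq_zero {E ι : Type*} [NormedAddCommGroup E]
    [InnerProductSpace ℝ E] (s : Finset ι) (a : ι → E)
    (ha : Pairwise fun j k => ⟪a j, a k⟫_ℝ = 0) :
    ‖∑ j ∈ s, a j‖ ^ 2 = ∑ j ∈ s, ‖a j‖ ^ 2 := by
  classical
  rw [← real_inner_self_eq_norm_sq, sum_inner]
  refine Finset.sum_congr rfl fun j hj => ?_
  rw [inner_sum, Finset.sum_eq_single_of_mem j hj fun k _ hkj => ha hkj.symm,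
    real_inner_self_eq_norm_sq]

lemma orthonormal_toLp_iff {ι : Type*} [DecidableEq ι] {d : ℕ} (u : ι → Fin d → ℝ) :
    Orthonormal ℝ (fun j => toLp 2 (u j)) ↔
      ∀ j k, ∑ i, u j i * u k i = if j = k then 1 else 0 := by
  simp only [orthonormal_iff_ite, PiLp.inner_apply, RCLike.inner_apply, conj_trivial, mul_comm]

section TraceInnerProduct

variable {m n : ℕ}

lemma tip_eq_inner (A B : Matrix (Fin m) (Fin n) ℝ) :
    tip A B = ⟪toLp 2 (vec A), toLp 2 (vec B)⟫_ℝ := by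
  rw [tip, ← vec_dotProduct_vec, EuclideanSpace.inner_eq_star_dotProduct, dotProduct_comm]
  rfl

lemma frob_eq_norm (A : Matrix (Fin m) (Fin n) ℝ) : frob A = ‖toLp 2 (vec A)‖ := by
  rw [frob, EuclideanSpace.norm_eq, ← Finset.sum_product', Finset.univ_product_univ]
  simp only [Real.norm_eq_abs, sq_abs]
  exact congrArg _ (Fintype.sum_equiv (Equiv.prodComm _ _) _ _ fun _ => rfl)

lemma frob_eq_zero_iff {A : Matrix (Fin m) (Fin n) ℝ} : frob A = 0 ↔ A = 0 := by
  rw [frob_eq_norm, norm_eq_zero, ← toLp_zero, (toLp_injective 2).eq_iff, vec_eq_zero_iff]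

lemma frob_sub_comm (A B : Matrix (Fin m) (Fin n) ℝ) : frob (A - B) = frob (B - A) := by
  rw [frob_eq_norm, frob_eq_norm, vec_sub, vec_sub, toLp_sub, toLp_sub, norm_sub_rev]

lemma frob_sub_sq (A B : Matrix (Fin m) (Fin n) ℝ) :
    frob (A - B) ^ 2 = frob A ^ 2 - 2 * tip A B + frob B ^ 2 := by
  rw [frob_eq_norm, frob_eq_norm, frob_eq_norm, tip_eq_inner, vec_sub, toLp_sub, norm_sub_sq_real]

lemma tip_sub_right (A B C : Matrix (Fin m) (Fin n) ℝ) : tip A (B - C) = tip A B - tip A C := by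
  simp only [tip, Matrix.mul_sub, trace_sub]

lemma tip_sum_smul_right {ι : Type*} (s : Finset ι) (A : Matrix (Fin m) (Fin n) ℝ) (t : ι → ℝ)
    (B : ι → Matrix (Fin m) (Fin n) ℝ) :
    tip A (∑ j ∈ s, t j • B j) = ∑ j ∈ s, t j * tip A (B j) := by
  simp only [tip, Matrix.mul_sum, trace_sum, Matrix.mul_smul, trace_smul, smul_eq_mul]

lemma toEuclideanLin_vecMulVec (a : EuclideanSpace ℝ (Fin m)) (b y : EuclideanSpace ℝ (Fin n)) :
    toEuclideanLin (vecMulVec ⇑a ⇑b) y = ⟪b, y⟫_ℝ • a := by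
  ext i
  simp only [toLpLin_apply, vecMulVec_apply, mulVec, dotProduct, PiLp.inner_apply,
    RCLike.inner_apply, conj_trivial, PiLp.smul_apply, smul_eq_mul, Finset.sum_mul]
  exact Finset.sum_congr rfl fun j _ => by ring

lemma tip_vecMulVec (W : Matrix (Fin m) (Fin n) ℝ) (x : EuclideanSpace ℝ (Fin m))
    (y : EuclideanSpace ℝ (Fin n)) :
    tip W (vecMulVec ⇑x ⇑y) = ⟪x, toEuclideanLin W y⟫_ℝ := by
  simp only [tip, trace, diag, mul_apply, transpose_apply, vecMulVec_apply, PiLp.inner_apply,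
    toLpLin_apply, mulVec, dotProduct, Finset.sum_mul, RCLike.inner_apply, conj_trivial]
  rw [Finset.sum_comm]
  exact Finset.sum_congr rfl fun i _ => Finset.sum_congr rfl fun j _ => by ring

lemma tip_vecMulVec_vecMulVec (a x : EuclideanSpace ℝ (Fin m)) (b y : EuclideanSpace ℝ (Fin n)) :
    tip (vecMulVec ⇑a ⇑b) (vecMulVec ⇑x ⇑y) = ⟪a, x⟫_ℝ * ⟪b, y⟫_ℝ := by
  rw [tip_vecMulVec, toEuclideanLin_vecMulVec, real_inner_smul_right, real_inner_comm a x, mul_comm]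

lemma tip_sum_smul_vecMulVec {ι : Type*} [Fintype ι] {u : ι → EuclideanSpace ℝ (Fin m)}
    {v : ι → EuclideanSpace ℝ (Fin n)} (hu : Orthonormal ℝ u) (hv : Orthonormal ℝ v)
    (a b : ι → ℝ) :
    tip (∑ j, a j • vecMulVec ⇑(u j) ⇑(v j)) (∑ j, b j • vecMulVec ⇑(u j) ⇑(v j)) =
      ∑ j, a j * b j := by
  classical
  have horth : Orthonormal ℝ fun j => toLp 2 (vec (vecMulVec ⇑(u j) ⇑(v j))) := by
    rw [orthonormal_iff_ite]
    intro j k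
    rw [← tip_eq_inner, tip_vecMulVec_vecMulVec, orthonormal_iff_ite.mp hu,
      orthonormal_iff_ite.mp hv]
    split_ifs <;> simp
  simpa only [tip_eq_inner, vec_sum, vec_smul, toLp_sum, toLp_smul, conj_trivial]
    using horth.inner_sum a b Finset.univ

lemma tip_eq_sum_inner (W M : Matrix (Fin m) (Fin n) ℝ)
    (q : OrthonormalBasis (Fin n) ℝ (EuclideanSpace ℝ (Fin n))) :
    tip W M = ∑ k, ⟪toEuclideanLin W (q k), toEuclideanLin M (q k)⟫_ℝ := by
  have hrow : ∀ (A : Matrix (Fin m) (Fin n) ℝ) i k,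
      ⟪q k, toLp 2 (A i)⟫_ℝ = toEuclideanLin A (q k) i := by
    simp [PiLp.inner_apply, toLpLin_apply, mulVec, dotProduct]
  calc tip W M = ∑ i, ⟪toLp 2 (W i), toLp 2 (M i)⟫_ℝ := by
        simp only [tip, trace, diag, mul_apply, transpose_apply, PiLp.inner_apply,
          RCLike.inner_apply, conj_trivial]
        rw [Finset.sum_comm]
        simp_rw [mul_comm]
    _ = ∑ i, ∑ k, ⟪toLp 2 (W i), q k⟫_ℝ * ⟪q k, toLp 2 (M i)⟫_ℝ := by
        simp only [q.sum_inner_mul_inner]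
    _ = ∑ k, ⟪toEuclideanLin W (q k), toEuclideanLin M (q k)⟫_ℝ := by
        rw [Finset.sum_comm]
        simp only [real_inner_comm (q _), hrow, PiLp.inner_apply, RCLike.inner_apply,
          conj_trivial, mul_comm]

end TraceInnerProduct

section TraceDuality

variable {m n : ℕ}

lemma norm_toEuclideanLin_le (W : Matrix (Fin m) (Fin n) ℝ) (x : EuclideanSpace ℝ (Fin n)) :
    ‖toEuclideanLin W x‖ ≤ opnorm W * ‖x‖ :=
  (LinearMap.toContinuousLinearMap (toEuclideanLin W)).le_opNorm x

lemma opnorm_sum_vecMulVec_le {ι : Type*} [Fintype ι] {C : ℝ} (hC : 0 ≤ C)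
    {a : ι → EuclideanSpace ℝ (Fin m)} {b : ι → EuclideanSpace ℝ (Fin n)}
    (ha : Pairwise fun j k => ⟪a j, a k⟫_ℝ = 0) (ha_le : ∀ j, ‖a j‖ ≤ C) (hb : Orthonormal ℝ b) :
    opnorm (∑ j, vecMulVec ⇑(a j) ⇑(b j)) ≤ C := by
  refine ContinuousLinearMap.opNorm_le_bound _ hC fun y => ?_
  have hW : toEuclideanLin (∑ j, vecMulVec ⇑(a j) ⇑(b j)) y = ∑ j, ⟪b j, y⟫_ℝ • a j := by
    simp only [map_sum, LinearMap.sum_apply, toEuclideanLin_vecMulVec]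
  have hsq : ‖∑ j, ⟪b j, y⟫_ℝ • a j‖ ^ 2 ≤ (C * ‖y‖) ^ 2 :=
    calc ‖∑ j, ⟪b j, y⟫_ℝ • a j‖ ^ 2 = ∑ j, ⟪b j, y⟫_ℝ ^ 2 * ‖a j‖ ^ 2 := by
          rw [norm_sum_sq_of_pairwise_inner_eq_zero]
          · simp only [norm_smul, mul_pow, Real.norm_eq_abs, sq_abs]
          · intro j k hjk
            rw [real_inner_smul_left, real_inner_smul_right, ha hjk, mul_zero, mul_zero]
      _ ≤ ∑ j, ⟪b j, y⟫_ℝ ^ 2 * C ^ 2 := by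
          gcongr with j
          exact ha_le j
      _ = C ^ 2 * ∑ j, ‖⟪b j, y⟫_ℝ‖ ^ 2 := by
          simp only [Real.norm_eq_abs, sq_abs, Finset.mul_sum, mul_comm]
      _ ≤ (C * ‖y‖) ^ 2 := by
          rw [mul_pow]
          exact mul_le_mul_of_nonneg_left (hb.sum_inner_products_le y) (by positivity)
  rw [LinearMap.coe_toContinuousLinearMap', hW]
  exact le_of_pow_le_pow_left₀ two_ne_zero (by positivity) hsq

def rightSingularBasis (M : Matrix (Fin m) (Fin n) ℝ) :
    OrthonormalBasis (Fin n) ℝ (EuclideanSpace ℝ (Fin n)) :=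
  (isHermitian_transpose_mul_self M).eigenvectorBasis

lemma inner_toEuclideanLin_rightSingularBasis (M : Matrix (Fin m) (Fin n) ℝ) (j k : Fin n) :
    ⟪toEuclideanLin M (rightSingularBasis M j), toEuclideanLin M (rightSingularBasis M k)⟫_ℝ =
      (isHermitian_transpose_mul_self M).eigenvalues j *
        ⟪rightSingularBasis M j, rightSingularBasis M k⟫_ℝ := by
  have h := (isHermitian_transpose_mul_self M).mulVec_eigenvectorBasis j
  simp only [EuclideanSpace.inner_eq_star_dotProduct, toLpLin_apply, star_trivial]
  rw [dotProduct_comm, dotProduct_mulVec, ← mulVec_transpose, mulVec_mulVec, rightSingularBasis, h,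
    smul_dotProduct, smul_eq_mul, dotProduct_comm]

lemma sval_eq_norm (M : Matrix (Fin m) (Fin n) ℝ) (k : Fin n) :
    sval M k = ‖toEuclideanLin M (rightSingularBasis M k)‖ := by
  rw [sval, norm_eq_sqrt_real_inner, inner_toEuclideanLin_rightSingularBasis,
    real_inner_self_eq_norm_sq, OrthonormalBasis.norm_eq_one, one_pow, mul_one]

lemma nuc_nonneg (M : Matrix (Fin m) (Fin n) ℝ) : 0 ≤ nuc M :=
  Finset.sum_nonneg fun _ _ => Real.sqrt_nonneg _

lemma tip_le_opnorm_mul_nuc (W M : Matrix (Fin m) (Fin n) ℝ) : tip W M ≤ opnorm W * nuc M := by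
  set q := rightSingularBasis M
  rw [tip_eq_sum_inner W M q, nuc, Finset.mul_sum]
  refine Finset.sum_le_sum fun k _ => ?_
  calc ⟪toEuclideanLin W (q k), toEuclideanLin M (q k)⟫_ℝ
      ≤ ‖toEuclideanLin W (q k)‖ * ‖toEuclideanLin M (q k)‖ := real_inner_le_norm _ _
    _ ≤ opnorm W * sval M k := by
      rw [sval_eq_norm]
      gcongr
      simpa [q.norm_eq_one] using norm_toEuclideanLin_le W (q k)

lemma exists_opnorm_le_one_tip_eq_nuc (M : Matrix (Fin m) (Fin n) ℝ) :
    ∃ W : Matrix (Fin m) (Fin n) ℝ, opnorm W ≤ 1 ∧ tip W M = nuc M := by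
  set q := rightSingularBasis M
  -- `‖M q_k‖⁻¹ = 0` when `M q_k = 0`, so the terms of zero singular values drop out by themselves
  set p : Fin n → EuclideanSpace ℝ (Fin m) :=
    fun k => ‖toEuclideanLin M (q k)‖⁻¹ • toEuclideanLin M (q k)
  refine ⟨∑ k, vecMulVec ⇑(p k) ⇑(q k), opnorm_sum_vecMulVec_le zero_le_one ?_ ?_ q.orthonormal, ?_⟩
  · intro j k hjk
    simp only [p, real_inner_smul_left, real_inner_smul_right, q,
      inner_toEuclideanLin_rightSingularBasis, (rightSingularBasis M).orthonormal.inner_eq_zero hjk,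
      mul_zero]
  · intro k
    rw [norm_smul, norm_inv, norm_norm]
    exact inv_mul_le_one
  · rw [tip_eq_sum_inner _ M q, nuc]
    refine Finset.sum_congr rfl fun k _ => ?_
    have hWq : toEuclideanLin (∑ j, vecMulVec ⇑(p j) ⇑(q j)) (q k) = p k := by
      simp [toEuclideanLin_vecMulVec, orthonormal_iff_ite.mp q.orthonormal]
    rw [hWq, sval_eq_norm, real_inner_smul_left, real_inner_self_eq_norm_sq, sq, ← mul_assoc]
    exact inv_mul_mul_self _

lemma nuc_sum_smul_vecMulVec_le {ι : Type*} [Fintype ι] (t : ι → ℝ)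
    (u : ι → EuclideanSpace ℝ (Fin m)) (v : ι → EuclideanSpace ℝ (Fin n)) :
    nuc (∑ j, t j • vecMulVec ⇑(u j) ⇑(v j)) ≤ ∑ j, |t j| * (‖u j‖ * ‖v j‖) := by
  obtain ⟨W, hW, hWN⟩ := exists_opnorm_le_one_tip_eq_nuc (∑ j, t j • vecMulVec ⇑(u j) ⇑(v j))
  rw [← hWN, tip_sum_smul_right]
  refine Finset.sum_le_sum fun j _ => ?_
  have hWv : ‖toEuclideanLin W (v j)‖ ≤ ‖v j‖ :=
    (norm_toEuclideanLin_le W (v j)).trans (mul_le_of_le_one_left (norm_nonneg _) hW)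
  rw [tip_vecMulVec]
  calc t j * ⟪u j, toEuclideanLin W (v j)⟫_ℝ ≤ |t j| * |⟪u j, toEuclideanLin W (v j)⟫_ℝ| := by
        rw [← abs_mul]; exact le_abs_self _
    _ ≤ |t j| * (‖u j‖ * ‖v j‖) := by
        gcongr
        exact (abs_real_inner_le_norm _ _).trans (by gcongr)

end TraceDuality

section SoftThresholding

variable {m n : ℕ}

theorem two_mul_tip_sub_sub_le_of_eq_softThreshold {ι : Type*} [Fintype ι] {c : ℝ} (hc : 0 ≤ c)
    {u : ι → EuclideanSpace ℝ (Fin m)} {v : ι → EuclideanSpace ℝ (Fin n)}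
    (hu : Orthonormal ℝ u) (hv : Orthonormal ℝ v) {σ : ι → ℝ} (hσ : ∀ j, 0 ≤ σ j)
    {X Â : Matrix (Fin m) (Fin n) ℝ} (hX : X = ∑ j, σ j • vecMulVec ⇑(u j) ⇑(v j))
    (hÂ : Â = ∑ j, max (σ j - c / 2) 0 • vecMulVec ⇑(u j) ⇑(v j))
    (A : Matrix (Fin m) (Fin n) ℝ) :
    2 * tip (X - Â) (A - Â) ≤ c * nuc A - c * nuc Â := by
  set t : ι → ℝ := fun j => max (σ j - c / 2) 0
  set w : ι → ℝ := fun j => σ j - t j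
  have hw : ∀ j, 0 ≤ w j ∧ w j ≤ c / 2 := fun j => by
    constructor <;> simp only [w, t] <;> grind
  have hwt : ∀ j, w j * t j = c / 2 * t j := fun j => by
    simp only [w, t]; grind
  have hD : X - Â = ∑ j, vecMulVec ⇑(w j • u j) ⇑(v j) := by
    simp only [hX, hÂ, ← Finset.sum_sub_distrib, ← sub_smul, ofLp_smul, smul_vecMulVec, w, t]
  have hDA : tip (X - Â) A ≤ c / 2 * nuc A := by
    refine (tip_le_opnorm_mul_nuc _ A).trans (mul_le_mul_of_nonneg_right ?_ (nuc_nonneg A))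
    refine hD ▸ opnorm_sum_vecMulVec_le (by linarith) (fun j k hjk => ?_) (fun j => ?_) hv
    · simp only [real_inner_smul_left, real_inner_smul_right, hu.inner_eq_zero hjk, mul_zero]
    · rw [norm_smul, hu.1 j, mul_one, Real.norm_of_nonneg (hw j).1]
      exact (hw j).2
  have hDÂ : tip (X - Â) Â = c / 2 * ∑ j, t j := by
    rw [hD, hÂ]
    simp only [ofLp_smul, smul_vecMulVec]
    rw [tip_sum_smul_vecMulVec hu hv, Finset.mul_sum]
    exact Finset.sum_congr rfl fun j _ => hwt j
  have hnucÂ : nuc Â ≤ ∑ j, t j := by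
    refine hÂ ▸ (nuc_sum_smul_vecMulVec_le t u v).trans_eq (Finset.sum_congr rfl fun j _ => ?_)
    rw [hu.1 j, hv.1 j, mul_one, mul_one, abs_of_nonneg (le_max_right _ _)]
  rw [tip_sub_right, hDÂ]
  linarith [mul_le_mul_of_nonneg_left hnucÂ hc]

lemma fobj_add_frob_sub_sq_le {lam : ℝ} {X Â : Matrix (Fin m) (Fin n) ℝ}
    (h : ∀ A, 2 * tip (X - Â) (A - Â) ≤ lam * (m * n : ℝ) * nuc A - lam * (m * n : ℝ) * nuc Â)
    (A : Matrix (Fin m) (Fin n) ℝ) :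
    Fobj lam X Â + frob (A - Â) ^ 2 ≤ Fobj lam X A := by
  have hA := frob_sub_sq (X - Â) (A - Â)
  rw [sub_sub_sub_cancel_right, frob_sub_comm X A, frob_sub_comm X Â] at hA
  unfold Fobj
  linarith [h A]

end SoftThresholding

theorem soft_thresholding_minimizes_nuclear_penalized_objective_general
    (m1 m2 : ℕ) (lam : ℝ) (hlam : 0 < lam)
    (X : Matrix (Fin m1) (Fin m2) ℝ) (r : ℕ)
    (σ : Fin r → ℝ) (u : Fin r → Fin m1 → ℝ) (v : Fin r → Fin m2 → ℝ)
    (hσpos : ∀ j, 0 < σ j)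
    (hu : ∀ j k : Fin r, ∑ i, u j i * u k i = if j = k then (1 : ℝ) else 0)
    (hv : ∀ j k : Fin r, ∑ i, v j i * v k i = if j = k then (1 : ℝ) else 0)
    (hX : X = ∑ j, σ j • Matrix.vecMulVec (u j) (v j))
    (Ahat : Matrix (Fin m1) (Fin m2) ℝ)
    (hAhat : Ahat =
      ∑ j, max (σ j - lam * (m1 * m2 : ℝ) / 2) 0 • Matrix.vecMulVec (u j) (v j)) :
    (∀ A : Matrix (Fin m1) (Fin m2) ℝ, Fobj lam X Ahat ≤ Fobj lam X A) ∧
    (∀ B : Matrix (Fin m1) (Fin m2) ℝ,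
      (∀ A : Matrix (Fin m1) (Fin m2) ℝ, Fobj lam X B ≤ Fobj lam X A) → B = Ahat) := by
  have hc : 0 ≤ lam * (m1 * m2 : ℝ) := by positivity
  have key := fobj_add_frob_sub_sq_le (lam := lam) <|
    two_mul_tip_sub_sub_le_of_eq_softThreshold hc ((orthonormal_toLp_iff u).2 hu)
      ((orthonormal_toLp_iff v).2 hv) (fun j => (hσpos j).le) hX hAhat
  refine ⟨fun A => by linarith [key A, sq_nonneg (frob (A - Ahat))], fun B hB => ?_⟩
  have hB0 : frob (B - Ahat) ^ 2 = 0 :=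
    le_antisymm (by linarith [key B, hB Ahat]) (sq_nonneg _)
  exact sub_eq_zero.mp (frob_eq_zero_iff.mp (pow_eq_zero_iff two_ne_zero |>.mp hB0))

/-- soft-thresholding of singular values. If `X = ∑ⱼ σⱼ uⱼ vⱼᵀ` is a singular
value decomposition of `X` (orthonormal `uⱼ`, `vⱼ`, positive nonincreasing `σⱼ`), then
`Â = ∑ⱼ (σⱼ − λm₁m₂/2)₊ uⱼ vⱼᵀ` is the unique minimizer of
`F(A) = ‖A − X‖₂² + λ m₁ m₂ ‖A‖₁` over `A ∈ ℝ^{m₁×m₂}`. -/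
theorem soft_thresholding_minimizes_nuclear_penalized_objective
    (m1 m2 : ℕ) (hm1 : 1 ≤ m1) (hm2 : 1 ≤ m2) (lam : ℝ) (hlam : 0 < lam)
    (X : Matrix (Fin m1) (Fin m2) ℝ) (r : ℕ)
    (σ : Fin r → ℝ) (u : Fin r → Fin m1 → ℝ) (v : Fin r → Fin m2 → ℝ)
    (hσpos : ∀ j, 0 < σ j)
    (hσmono : ∀ j k : Fin r, j ≤ k → σ k ≤ σ j)
    (hu : ∀ j k : Fin r, ∑ i, u j i * u k i = if j = k then (1 : ℝ) else 0)
    (hv : ∀ j k : Fin r, ∑ i, v j i * v k i = if j = k then (1 : ℝ) else 0)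
    (hX : X = ∑ j, σ j • Matrix.vecMulVec (u j) (v j))
    (Ahat : Matrix (Fin m1) (Fin m2) ℝ)
    (hAhat : Ahat =
      ∑ j, max (σ j - lam * (m1 * m2 : ℝ) / 2) 0 • Matrix.vecMulVec (u j) (v j)) :
    (∀ A : Matrix (Fin m1) (Fin m2) ℝ, Fobj lam X Ahat ≤ Fobj lam X A) ∧
    (∀ B : Matrix (Fin m1) (Fin m2) ℝ,
      (∀ A : Matrix (Fin m1) (Fin m2) ℝ, Fobj lam X B ≤ Fobj lam X A) → B = Ahat) :=
  soft_thresholding_minimizes_nuclear_penalized_objective_general m1 m2 lam hlam X r σ u v hσpos hu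
    hv hX Ahat hAhat

end
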